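/- arXiv:2408.10346 — 2 statements merged into one kernel-verified Lean document; each statement's English description precedes it below -/
import Mathlib

section
/- No monotone Condorcet consistent tournament rule on n ≥ 3 agents is 2-NM_λ for any λ < 1. -/
open Classical Finset

structure Tournament (n : ℕ) where
  beats : Fin n → Fin n → Prop
  irrefl : ∀ i, ¬ beats i i
  total : ∀ i j, i ≠ j → (beats i j ↔ ¬ beats j i)

/-- `r` maps each tournament to a probability distribution over the agents. -/
def IsProbRule {n : ℕ} (r : Tournament n → Fin n → ℝ) : Prop :=
  ∀ T, (∀ i, 0 ≤ r T i) ∧ ∑ i, r T i = 1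

/-- `T` and `T'` agree on all matches except possibly the one between `i` and `j`. -/
def Adjacent {n : ℕ} (i j : Fin n) (T T' : Tournament n) : Prop :=
  ∀ a b, ¬((a = i ∧ b = j) ∨ (a = j ∧ b = i)) → (T.beats a b ↔ T'.beats a b)

def CondorcetConsistent {n : ℕ} (r : Tournament n → Fin n → ℝ) : Prop :=
  ∀ T i, (∀ j, j ≠ i → T.beats i j) → r T i = 1

def MonotoneRule {n : ℕ} (r : Tournament n → Fin n → ℝ) : Prop :=
  ∀ i j (T T' : Tournament n), i ≠ j → Adjacent i j T T' → T ≠ T' →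
    T.beats i j → r T' i ≤ r T i

/-- 2-NM_λ-α. -/
def TwoNM {n : ℕ} (lam alpha : ℝ) (r : Tournament n → Fin n → ℝ) : Prop :=
  ∀ i j (T T' : Tournament n), i ≠ j → Adjacent i j T T' → T ≠ T' →
    r T' i + r T' j ≤
      r T i + r T j + lam * max (r T i - r T' i) (r T j - r T' j) + alpha

/-!
Take a tournament with a 3-cycle `a → b → c → a` whose three agents beat everybody else.
Reversing any one edge of the cycle, say `a → b`, makes `b` a Condorcet winner, so by
2-NM_λ the pair `{a, b}` already has `1 ≤ r_b + (1 + λ) r_a`. Summing the three cyclic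
versions gives `3 ≤ (2 + λ)(r_a + r_b + r_c) ≤ 2 + λ`, i.e. `λ ≥ 1`.
-/

namespace Tournament

variable {n : ℕ}

lemma ne_of_beats (T : Tournament n) {i j : Fin n} (h : T.beats i j) : i ≠ j :=
  fun hij => T.irrefl i (hij ▸ h)

def byIndex (n : ℕ) : Tournament n where
  beats i j := i < j
  irrefl := lt_irrefl
  total _ _ hij := ⟨fun h => h.not_gt, fun h => (lt_or_gt_of_ne hij).resolve_right h⟩

def flip (T : Tournament n) (i j : Fin n) : Tournament n where
  beats x y := if s(x, y) = s(i, j) then T.beats y x else T.beats x y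
  irrefl x := by split_ifs <;> exact T.irrefl x
  total x y hxy := by
    rw [Sym2.eq_swap (a := y)]
    split_ifs
    · exact T.total y x hxy.symm
    · exact T.total x y hxy

@[simp]
lemma flip_beats (T : Tournament n) (i j x y : Fin n) :
    (T.flip i j).beats x y ↔ if s(x, y) = s(i, j) then T.beats y x else T.beats x y :=
  Iff.rfl

lemma adjacent_flip (T : Tournament n) (i j : Fin n) : Adjacent i j T (T.flip i j) :=
  fun x y hxy => by rw [flip_beats, if_neg (by rwa [Sym2.eq_iff])]

lemma ne_flip (T : Tournament n) {i j : Fin n} (hij : i ≠ j) : T ≠ T.flip i j := by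
  intro h
  have hflip : T.beats i j ↔ T.beats j i := by
    conv_lhs => rw [h]
    rw [flip_beats, if_pos rfl]
  exact iff_not_self (hflip.symm.trans (T.total i j hij))

def IsTopCycle (T : Tournament n) (a b c : Fin n) : Prop :=
  T.beats a b ∧ T.beats b c ∧ T.beats c a ∧
    ∀ k, k ≠ a → k ≠ b → k ≠ c → T.beats a k ∧ T.beats b k ∧ T.beats c k

namespace IsTopCycle

variable {T : Tournament n} {a b c : Fin n}

lemma rotate (h : T.IsTopCycle a b c) : T.IsTopCycle b c a := by
  obtain ⟨hab, hbc, hca, hout⟩ := h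
  refine ⟨hbc, hca, hab, fun k hb hc ha => ?_⟩
  obtain ⟨hak, hbk, hck⟩ := hout k ha hb hc
  exact ⟨hbk, hck, hak⟩

lemma beats_flip (h : T.IsTopCycle a b c) : ∀ k, k ≠ b → (T.flip b a).beats b k := by
  obtain ⟨hab, hbc, -, hout⟩ := h
  intro k hkb
  by_cases hka : k = a
  · subst hka
    rwa [flip_beats, if_pos rfl]
  have hpair : s(b, k) ≠ s(b, a) := by
    rw [ne_eq, Sym2.eq_iff]
    rintro (⟨-, rfl⟩ | ⟨-, rfl⟩) <;> contradiction
  rw [flip_beats, if_neg hpair]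
  by_cases hkc : k = c
  · exact hkc ▸ hbc
  · exact (hout k hka hkb hkc).2.1

end IsTopCycle

lemma exists_isTopCycle (hn : 3 ≤ n) :
    ∃ (T : Tournament n) (a b c : Fin n), T.IsTopCycle a b c := by
  refine ⟨(byIndex n).flip ⟨0, by omega⟩ ⟨2, by omega⟩, ⟨0, by omega⟩, ⟨1, by omega⟩, ⟨2, by omega⟩,
    ?_⟩
  simp only [IsTopCycle, flip_beats, byIndex, Sym2.eq_iff, Fin.ext_iff, Fin.lt_def, ne_eq]
  refine ⟨by simp, by simp, by simp, fun k h0 _ h2 => ?_⟩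
  simp only [h0, h2, and_false, or_self, if_false]
  omega

end Tournament

namespace IsProbRule

variable {n : ℕ} {r : Tournament n → Fin n → ℝ}

lemma sum_le_one (hr : IsProbRule r) (T : Tournament n) (s : Finset (Fin n)) :
    ∑ i ∈ s, r T i ≤ 1 :=
  (hr T).2 ▸ sum_le_univ_sum_of_nonneg (hr T).1

lemma eq_zero_of_eq_one (hr : IsProbRule r) {T : Tournament n} {i j : Fin n}
    (hi : r T i = 1) (hij : i ≠ j) : r T j = 0 := by
  have hpair := hr.sum_le_one T {i, j}
  rw [sum_pair hij, hi] at hpair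
  linarith [(hr T).1 j]

end IsProbRule

variable {n : ℕ} {r : Tournament n → Fin n → ℝ} {lam : ℝ}

lemma TwoNM.one_le_of_eq_one (hnm : TwoNM lam 0 r) (hr : IsProbRule r) {i j : Fin n}
    {T T' : Tournament n} (hij : i ≠ j) (hadj : Adjacent i j T T') (hne : T ≠ T')
    (hwin : r T' i = 1) : 1 ≤ r T i + (1 + lam) * r T j := by
  have hineq := hnm i j T T' hij hadj hne
  have hi : r T i ≤ 1 := by simpa using hr.sum_le_one T {i}
  have hle : r T i - 1 ≤ r T j - 0 := by linarith [(hr T).1 j]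
  rw [hwin, hr.eq_zero_of_eq_one hwin hij, max_eq_right hle] at hineq
  linarith

lemma one_le_of_isTopCycle (hr : IsProbRule r) (hcc : CondorcetConsistent r)
    (hnm : TwoNM lam 0 r) {T : Tournament n} {a b c : Fin n} (h : T.IsTopCycle a b c) :
    1 ≤ r T b + (1 + lam) * r T a :=
  have hba := (T.ne_of_beats h.1).symm
  hnm.one_le_of_eq_one hr hba (T.adjacent_flip b a) (T.ne_flip hba) (hcc _ _ h.beats_flip)

lemma not_twoNM_of_isTopCycle (hr : IsProbRule r) (hcc : CondorcetConsistent r) (hlam : lam < 1)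
    {T : Tournament n} {a b c : Fin n} (h : T.IsTopCycle a b c) : ¬ TwoNM lam 0 r := by
  intro hnm
  have hab := one_le_of_isTopCycle hr hcc hnm h
  have hbc := one_le_of_isTopCycle hr hcc hnm h.rotate
  have hca := one_le_of_isTopCycle hr hcc hnm h.rotate.rotate
  have hsum : r T a + r T b + r T c ≤ 1 := by
    have h3 := hr.sum_le_one T {a, b, c}
    rwa [sum_insert (by simp [T.ne_of_beats h.1, (T.ne_of_beats h.2.2.1).symm]),
      sum_pair (T.ne_of_beats h.2.1), ← add_assoc] at h3
  have hnonneg : 0 ≤ r T a + r T b + r T c := by linarith [(hr T).1 a, (hr T).1 b, (hr T).1 c]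
  nlinarith [mul_nonneg (sub_nonneg.2 hlam.le) hnonneg,
    mul_nonneg (sub_nonneg.2 hlam.le) (sub_nonneg.2 hsum)]

theorem stmt1_general {n : ℕ} (hn : 3 ≤ n) (lam : ℝ) (hlam : lam < 1)
    (r : Tournament n → Fin n → ℝ) (hr : IsProbRule r)
    (hcc : CondorcetConsistent r) :
    ¬ TwoNM lam 0 r := by
  obtain ⟨T, a, b, c, hcycle⟩ := Tournament.exists_isTopCycle hn
  exact not_twoNM_of_isTopCycle hr hcc hlam hcycle

theorem stmt1 {n : ℕ} (hn : 3 ≤ n) (lam : ℝ) (hlam0 : 0 ≤ lam) (hlam : lam < 1)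
    (r : Tournament n → Fin n → ℝ) (hr : IsProbRule r)
    (hcc : CondorcetConsistent r) (hmono : MonotoneRule r) :
    ¬ TwoNM lam 0 r :=
  stmt1_general hn lam hlam r hr hcc
end

section
/- In the superman-kryptonite tournament on n agents, under the Top Cycle Rule each agent wins with probability 1/n; consequently, if the Top Cycle Rule is 2-NM_λ-α, then λ ≥ (1 − α)·n − 2. -/
open Classical Finset

/-- A nonempty set of agents all of whose members beat everyone outside. -/
def Dominant {n : ℕ} (T : Tournament n) (S : Finset (Fin n)) : Prop :=
  S.Nonempty ∧ ∀ i ∈ S, ∀ j ∉ S, T.beats i j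

/-- The top cycle: the minimal (least) nonempty dominant set. -/
def IsTopCycle {n : ℕ} (T : Tournament n) (S : Finset (Fin n)) : Prop :=
  Dominant T S ∧ ∀ S', Dominant T S' → S ⊆ S'

/-!
The superman-kryptonite tournament is strongly connected: `0 → 1 → ⋯ → n - 1` is a path of
wins and `n - 1` beats `0`. A dominant set is closed under "is beaten by", so it is everything,
and the Top Cycle Rule is uniform. Reversing the match between `0` and `n - 1` gives the transitive
tournament, where `0` is a Condorcet winner; so the pair's joint winning probability jumps from
`2/n` to `1` while the largest individual loss is `1/n`, and 2-NM_λ-α forces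
`1 ≤ 2/n + λ/n + α`.
-/

open Relation

def IsTopCycleRule {n : ℕ} (r : Tournament n → Fin n → ℝ) : Prop :=
  ∀ T S, IsTopCycle T S → ∀ i, r T i = if i ∈ S then ((S.card : ℝ))⁻¹ else 0

def IsSupermanKryptonite {n : ℕ} (T : Tournament n) : Prop :=
  ∀ i j : Fin n, T.beats i j ↔
    ((i.1 < j.1 ∧ ¬(i.1 = 0 ∧ j.1 = n - 1)) ∨ (i.1 = n - 1 ∧ j.1 = 0))

namespace Tournament

variable {n : ℕ}

theorem beats_asymm (T : Tournament n) {i j : Fin n} (h : T.beats i j) : ¬ T.beats j i := by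
  have hij : i ≠ j := by
    rintro rfl
    exact T.irrefl i h
  exact (T.total i j hij).mp h

def linear (n : ℕ) : Tournament n where
  beats i j := i < j
  irrefl i := lt_irrefl i
  total _ _ hij := ⟨fun h => h.not_gt, fun h => (not_lt.mp h).lt_of_ne hij⟩

theorem linear_beats_of_ne_zero [NeZero n] {j : Fin n} (hj : j ≠ 0) : (linear n).beats 0 j :=
  (Fin.pos_iff_ne_zero' j).mpr hj

end Tournament

section TopCycle

variable {n : ℕ} {T : Tournament n} {S : Finset (Fin n)}

theorem Dominant.mem_of_beats (hS : Dominant T S) {i j : Fin n} (hi : i ∈ S)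
    (hji : T.beats j i) : j ∈ S := by
  by_contra hj
  exact T.beats_asymm (hS.2 i hi j hj) hji

theorem Dominant.mem_of_reflTransGen (hS : Dominant T S) {i j : Fin n}
    (hji : ReflTransGen T.beats j i) (hi : i ∈ S) : j ∈ S := by
  induction hji using ReflTransGen.head_induction_on with
  | refl => exact hi
  | head hjk _ ih => exact hS.mem_of_beats ih hjk

theorem isTopCycle_univ_of_reflTransGen [NeZero n] (h : ∀ i j, ReflTransGen T.beats i j) :
    IsTopCycle T univ :=
  ⟨⟨univ_nonempty, fun _ _ j hj => absurd (mem_univ j) hj⟩,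
    fun _ hS i _ => let ⟨_, hw⟩ := hS.1; hS.mem_of_reflTransGen (h i _) hw⟩

theorem isTopCycle_singleton_of_beats {i : Fin n} (h : ∀ j, j ≠ i → T.beats i j) :
    IsTopCycle T {i} := by
  refine ⟨⟨singleton_nonempty i, fun a ha j hj => ?_⟩, fun S hS => ?_⟩
  · rw [mem_singleton.mp ha]
    exact h j (Finset.notMem_singleton.mp hj)
  · obtain ⟨w, hw⟩ := hS.1
    rw [singleton_subset_iff]
    by_cases hwi : w = i
    · exact hwi ▸ hw
    · exact hS.mem_of_beats hw (h w hwi)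

theorem IsTopCycleRule.apply_of_isTopCycle_univ {r : Tournament n → Fin n → ℝ}
    (hr : IsTopCycleRule r) (hT : IsTopCycle T univ) (i : Fin n) : r T i = (n : ℝ)⁻¹ := by
  simp [hr T univ hT i]

theorem IsTopCycleRule.apply_of_beats {r : Tournament n → Fin n → ℝ} (hr : IsTopCycleRule r)
    {i : Fin n} (h : ∀ j, j ≠ i → T.beats i j) (j : Fin n) :
    r T j = if j = i then 1 else 0 := by
  simp [hr T {i} (isTopCycle_singleton_of_beats h) j]

end TopCycle

namespace IsSupermanKryptonite

variable {n : ℕ} {T : Tournament n}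

theorem reflTransGen_of_le (hT : IsSupermanKryptonite T) (hn : 3 ≤ n) {i j : Fin n}
    (hij : i ≤ j) : ReflTransGen T.beats i j := by
  refine reflTransGen_of_succ_of_le _ (fun k hk => (hT _ _).mpr (Or.inl ?_)) hij
  have hsucc : k.1 + 1 = (Order.succ k).1 :=
    Nat.covBy_iff_add_one_eq.mp <| Fin.covBy_iff.mp <|
      Order.covBy_succ_of_not_isMax (not_isMax_of_lt hk.2)
  omega

theorem reflTransGen [NeZero n] (hT : IsSupermanKryptonite T) (hn : 3 ≤ n) (i j : Fin n) :
    ReflTransGen T.beats i j :=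
  (hT.reflTransGen_of_le hn le_top).trans <|
    .head ((hT ⊤ 0).mpr (Or.inr ⟨rfl, rfl⟩)) (hT.reflTransGen_of_le hn (Fin.zero_le j))

theorem adjacent_linear [NeZero n] (hT : IsSupermanKryptonite T) :
    Adjacent 0 ⊤ T (Tournament.linear n) := by
  intro a b hab
  simp only [hT a b, Tournament.linear, Fin.lt_def]
  simp only [Fin.ext_iff, Fin.val_zero, Fin.val_top] at hab
  omega

theorem ne_linear [NeZero n] (hT : IsSupermanKryptonite T) : T ≠ Tournament.linear n := by
  rintro rfl
  have h : (Tournament.linear n).beats ⊤ 0 := (hT ⊤ 0).mpr (Or.inr ⟨rfl, rfl⟩)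
  simp only [Tournament.linear, Fin.lt_def, Fin.val_zero, Fin.val_top] at h
  omega

end IsSupermanKryptonite

/-- If `r` is the Top Cycle Rule (a uniformly random member of the top cycle
wins), then in the superman-kryptonite tournament on `n` agents every agent wins
with probability `1/n`; consequently, if the rule is 2-NM_λ-α then
`λ ≥ (1 - α)n - 2`. -/
theorem stmt12 {n : ℕ} (hn : 3 ≤ n) (r : Tournament n → Fin n → ℝ)
    (hr : ∀ T S, IsTopCycle T S → ∀ i, r T i = if i ∈ S then ((S.card : ℝ))⁻¹ else 0)
    (T : Tournament n)
    (hT : ∀ i j : Fin n, T.beats i j ↔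
      ((i.1 < j.1 ∧ ¬(i.1 = 0 ∧ j.1 = n - 1)) ∨ (i.1 = n - 1 ∧ j.1 = 0))) :
    (∀ i, r T i = (n : ℝ)⁻¹) ∧
      ∀ lam alpha : ℝ, TwoNM lam alpha r → (1 - alpha) * n - 2 ≤ lam := by
  have : NeZero n := ⟨by omega⟩
  have hTCR : IsTopCycleRule r := hr
  have hSK : IsSupermanKryptonite T := hT
  have hrT := hTCR.apply_of_isTopCycle_univ (isTopCycle_univ_of_reflTransGen (hSK.reflTransGen hn))
  refine ⟨hrT, fun lam alpha h2nm => ?_⟩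
  have h0top : (0 : Fin n) ≠ ⊤ := by
    rw [Ne, Fin.zero_eq_top]
    omega
  have hrLin := hTCR.apply_of_beats fun _ => Tournament.linear_beats_of_ne_zero
  have key := h2nm 0 ⊤ T (Tournament.linear n) h0top hSK.adjacent_linear hSK.ne_linear
  rw [hrT, hrT, hrLin, hrLin, if_pos rfl, if_neg h0top.symm, sub_zero,
    max_eq_right (by linarith)] at key
  have hnpos : (0 : ℝ) < n := by positivity
  have := mul_le_mul_of_nonneg_right key hnpos.le
  field_simp at this
  linarith
end
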